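/- Let Δ ∈ ℝ, N ≥ 1, let y_1 < ⋯ < y_N be integers, and let R > 0 satisfy R² - 2|Δ|R - 1 > 0. Then Σ_{σ ∈ S_N} sgn(σ) · (2πi)^{-N} ∮_{C_R}⋯∮_{C_R} [ ∏_{j<k with σ(j)>σ(k)} (1 + ξ_{σ(k)}ξ_{σ(j)} - 2Δξ_{σ(j)}) / (1 + ξ_{σ(k)}ξ_{σ(j)} - 2Δξ_{σ(k)}) ] · ∏_{j=1}^N ξ_{σ(j)}^{y_j - y_{σ(j)} - 1} dξ_1⋯dξ_N = 1. (In the notation of Section 8 this is the identity Σ_{σ∈S_N} (-1)^σ F(σ, ∅) = 1.) -/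

import Mathlib

open scoped Real BigOperators

/-- `(2πi)⁻¹ ∮_{|z - c| = ρ} f(z) dz`, positively oriented circle. -/
noncomputable def cInt (c : ℂ) (ρ : ℝ) (f : ℂ → ℂ) : ℂ :=
  (2 * Real.pi * Complex.I)⁻¹ * ∮ z in C(c, ρ), f z

/-- Iterated contour integral: the `i`-th coordinate is integrated using the
functional `J i`. -/
noncomputable def iterInt : (n : ℕ) → (Fin n → ((ℂ → ℂ) → ℂ)) → ((Fin n → ℂ) → ℂ) → ℂ
  | 0, _, f => f Fin.elim0
  | n + 1, J, f => J 0 fun z => iterInt n (fun i => J i.succ) fun w => f (Fin.cons z w)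

/-- Dispersion relation `ε(ξ) = ξ + ξ⁻¹ - 2Δ`. -/
noncomputable def eps (Δ : ℝ) (ξ : ℂ) : ℂ := ξ + ξ⁻¹ - 2 * (Δ : ℂ)

/-- Yang–Yang S-matrix `S(ξ', ξ) = -(1 + ξξ' - 2Δξ')/(1 + ξξ' - 2Δξ)`. -/
noncomputable def Smat (Δ : ℂ) (ξ' ξ : ℂ) : ℂ :=
  -(1 + ξ * ξ' - 2 * Δ * ξ') / (1 + ξ * ξ' - 2 * Δ * ξ)

/-- `A_σ(ξ)`: the product of `S(ξ_β, ξ_α)` over inversions of `σ`, i.e. over all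
pairs `α < β` such that `β` appears before `α` in the list `(σ(1), …, σ(N))`. -/
noncomputable def Acoef {N : ℕ} (Δ : ℂ) (σ : Equiv.Perm (Fin N)) (ξ : Fin N → ℂ) : ℂ :=
  ∏ p ∈ Finset.univ.filter
      (fun p : Fin N × Fin N => p.1 < p.2 ∧ σ.symm p.2 < σ.symm p.1),
    Smat Δ (ξ p.2) (ξ p.1)

/-- The Bethe ansatz wave function `ψ_N(X; t)` with initial condition `Y = y`,
on small contours of radius `r`. -/
noncomputable def psi (Δ : ℝ) (N : ℕ) (r : ℝ) (y : Fin N → ℤ) (x : Fin N → ℤ) (t : ℝ) : ℂ :=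
  ∑ σ : Equiv.Perm (Fin N),
    iterInt N (fun _ => cInt 0 r) fun ξ =>
      Acoef (Δ : ℂ) σ ξ * (∏ i, ξ (σ i) ^ x i) *
        ∏ i, ξ i ^ (-y i - 1) * Complex.exp (-Complex.I * (t : ℂ) * eps Δ (ξ i))

/-!
Integrate out the innermost variable `ξ_N`; after reindexing the monomial by `σ⁻¹` it carries
the exponent `y_{σ⁻¹ N} - y_N - 1`. If `σ` fixes `N` this exponent is `-1` and no inversion
involves `N`, so the `ξ_N`-integral equals `1` and what remains is the integrand of `σ`
restricted to `{1, …, N - 1}`. Otherwise the exponent is at most `-2`, while for `|ξ_N| ≥ R`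
(and the other variables on the circle) every inversion ratio is holomorphic and bounded, since
`R² - 2|Δ|R - 1 > 0` keeps its denominator away from zero; pushing the contour to infinity shows
that the `ξ_N`-integral vanishes. By induction only `σ = 1` contributes, with value `1`.
-/

open Complex Metric Finset Filter Set Topology

section ContourIntegral

lemma cInt_const_mul (c : ℂ) (ρ : ℝ) (a : ℂ) (f : ℂ → ℂ) :
    cInt c ρ (fun z => a * f z) = a * cInt c ρ f := by
  simp only [cInt, circleIntegral.integral_const_mul]
  ring

lemma cInt_congr {c : ℂ} {ρ : ℝ} {f g : ℂ → ℂ} (h : EqOn f g (sphere c |ρ|)) :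
    cInt c ρ f = cInt c ρ g := by
  simp only [cInt, circleIntegral]
  congr 1
  exact intervalIntegral.integral_congr fun θ _ => by
    simp only [h (circleMap_mem_sphere' c ρ θ)]

lemma cInt_zero (c : ℂ) (ρ : ℝ) : cInt c ρ (fun _ => 0) = 0 := by
  simp [cInt, circleIntegral]

lemma cInt_sub_center_inv (c : ℂ) {ρ : ℝ} (hρ : ρ ≠ 0) :
    cInt c ρ (fun z => (z - c)⁻¹) = 1 := by
  rw [cInt, circleIntegral.integral_sub_center_inv c hρ, inv_mul_cancel₀ two_pi_I_ne_zero]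

/-- Push the contour out to radius `r → ∞`: the integral is at most `2π r · K / r²`. -/
lemma circleIntegral_eq_zero_of_norm_le_div_sq {E : Type*} [NormedAddCommGroup E]
    [NormedSpace ℂ E] [CompleteSpace E] {c : ℂ} {R K : ℝ} (hR : 0 < R) {g : ℂ → E}
    (hd : ∀ z, R ≤ ‖z - c‖ → DifferentiableAt ℂ g z)
    (hb : ∀ z, R ≤ ‖z - c‖ → ‖g z‖ ≤ K / ‖z - c‖ ^ 2) :
    (∮ z in C(c, R), g z) = 0 := by
  have hle : ∀ r, R ≤ r → ‖∮ z in C(c, R), g z‖ ≤ 2 * π * r * (K / r ^ 2) := by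
    intro r hr
    rw [← circleIntegral_eq_of_differentiable_on_annulus_off_countable hR hr
      Set.countable_empty]
    · refine circleIntegral.norm_integral_le_of_norm_le_const (hR.le.trans hr) fun z hz => ?_
      rw [mem_sphere_iff_norm] at hz
      exact hz ▸ hb z (hz ▸ hr)
    · intro z hz
      refine (hd z ?_).continuousAt.continuousWithinAt
      simpa [dist_eq] using hz.2
    · exact fun z hz => hd z (by simpa [dist_eq] using hz.1.2 : R < ‖z - c‖).le
  have hlim : Tendsto (fun r : ℝ => 2 * π * r * (K / r ^ 2)) atTop (𝓝 0) := by
    have : Tendsto (fun r : ℝ => 2 * π * K / r) atTop (𝓝 0) :=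
      tendsto_const_nhds.div_atTop tendsto_id
    refine this.congr' ?_
    filter_upwards [eventually_gt_atTop 0] with r hr
    field_simp
  exact norm_le_zero_iff.mp (ge_of_tendsto hlim (eventually_atTop.2 ⟨R, hle⟩))

lemma cInt_zpow_mul_eq_zero {R : ℝ} (hR : 0 < R) {e : ℤ} (he : e ≤ -2) {h : ℂ → ℂ}
    (hd : ∀ z, R ≤ ‖z‖ → DifferentiableAt ℂ h z) (hb : ∃ C, ∀ z, R ≤ ‖z‖ → ‖h z‖ ≤ C) :
    cInt 0 R (fun z => z ^ e * h z) = 0 := by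
  obtain ⟨C, hb⟩ := hb
  suffices (∮ z in C(0, R), z ^ e * h z) = 0 by simp [cInt, this]
  refine circleIntegral_eq_zero_of_norm_le_div_sq (K := R ^ (e + 2) * C) hR
    (fun z hz => ?_) (fun z hz => ?_) <;> rw [sub_zero] at hz
  · have hz0 : z ≠ 0 := norm_pos_iff.mp (hR.trans_le hz)
    exact ((differentiableAt_id.zpow (Or.inl hz0))).mul (hd z hz)
  · have hz0 : 0 < ‖z‖ := hR.trans_le hz
    have hpow : ‖z‖ ^ (e + 2) ≤ R ^ (e + 2) := by
      rw [← neg_neg (e + 2), zpow_neg ‖z‖, zpow_neg R]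
      exact inv_anti₀ (zpow_pos hR _) (zpow_le_zpow_left₀ (by omega : (0 : ℤ) ≤ -(e + 2)) hR.le hz)
    have hsplit : ‖z‖ ^ e = ‖z‖ ^ (e + 2) / ‖z‖ ^ 2 := by
      rw [zpow_add₀ hz0.ne']; simp [field]
    rw [sub_zero, norm_mul, norm_zpow, hsplit, div_mul_eq_mul_div]
    gcongr ?_ / _
    exact mul_le_mul hpow (hb z hz) (norm_nonneg _) (zpow_nonneg hR.le _)

end ContourIntegral

section IteratedIntegral

lemma iterInt_succ_eq_iterInt_snoc (n : ℕ) (J : Fin (n + 1) → (ℂ → ℂ) → ℂ)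
    (f : (Fin (n + 1) → ℂ) → ℂ) :
    iterInt (n + 1) J f =
      iterInt n (fun i => J i.castSucc) fun w => J (Fin.last n) fun t => f (Fin.snoc w t) := by
  induction n with
  | zero =>
    show J 0 _ = J 0 _
    congr! with z
    exact congrArg f (funext fun i => Fin.fin_one_eq_zero i ▸ rfl)
  | succ n ih =>
    show J 0 _ = J 0 _
    refine congrArg (J 0) (funext fun z => ?_)
    rw [ih]
    simp only [Fin.cons_snoc_eq_snoc_cons, Fin.succ_castSucc, Fin.succ_last]

variable {c : ℂ} {ρ : ℝ}

lemma iterInt_cInt_congr {n : ℕ} {f g : (Fin n → ℂ) → ℂ}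
    (h : ∀ w : Fin n → ℂ, (∀ i, w i ∈ sphere c |ρ|) → f w = g w) :
    iterInt n (fun _ => cInt c ρ) f = iterInt n (fun _ => cInt c ρ) g := by
  induction n with
  | zero => exact h _ finZeroElim
  | succ n ih =>
    refine cInt_congr fun z hz => ih fun w hw => h _ fun i => ?_
    refine Fin.cases ?_ (fun j => ?_) i
    · simpa using hz
    · simpa using hw j

lemma iterInt_cInt_zero (n : ℕ) : iterInt n (fun _ => cInt c ρ) (fun _ => 0) = 0 := by
  induction n with
  | zero => rfl
  | succ n ih =>
    show cInt c ρ (fun _ => iterInt n _ _) = 0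
    simp only [ih, cInt_zero]

end IteratedIntegral

namespace Equiv.Perm

def inversions {N : ℕ} (σ : Perm (Fin N)) : Finset (Fin N × Fin N) :=
  univ.filter fun p => p.1 < p.2 ∧ σ p.2 < σ p.1

variable {n : ℕ} (σ : Perm (Fin (n + 1)))

lemma apply_castSucc_ne_last (hσ : σ (Fin.last n) = Fin.last n) (i : Fin n) :
    σ i.castSucc ≠ Fin.last n :=
  fun h => (Fin.castSucc_lt_last i).ne (σ.injective (h.trans hσ.symm))

lemma symm_apply_castSucc_ne_last (hσ : σ (Fin.last n) = Fin.last n) (i : Fin n) :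
    σ.symm i.castSucc ≠ Fin.last n :=
  fun h => (Fin.castSucc_lt_last i).ne (by rw [← hσ, ← h, apply_symm_apply])

variable (hσ : σ (Fin.last n) = Fin.last n)

def castPred : Perm (Fin n) where
  toFun i := (σ i.castSucc).castPred (σ.apply_castSucc_ne_last hσ i)
  invFun i := (σ.symm i.castSucc).castPred (σ.symm_apply_castSucc_ne_last hσ i)
  left_inv i := by simp
  right_inv i := by simp

@[simp]
lemma castSucc_castPred_apply (i : Fin n) : (σ.castPred hσ i).castSucc = σ i.castSucc :=
  Fin.castSucc_castPred _ (σ.apply_castSucc_ne_last hσ i)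

lemma castPred_eq_one_iff : σ.castPred hσ = 1 ↔ σ = 1 := by
  refine ⟨fun h => ?_, fun h => ?_⟩
  · ext i
    induction i using Fin.lastCases with
    | last => simp [hσ]
    | cast j => simp [← σ.castSucc_castPred_apply hσ, h]
  · ext i
    simp [castPred, h]

lemma prod_inversions_eq_prod_inversions_castPred {M : Type*} [CommMonoid M]
    (g : Fin (n + 1) × Fin (n + 1) → M) :
    ∏ p ∈ σ.inversions, g p =
      ∏ q ∈ (σ.castPred hσ).inversions, g (q.1.castSucc, q.2.castSucc) := by
  simp only [inversions, prod_filter, Fintype.prod_prod_type, Fin.prod_univ_castSucc, hσ,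
    ← σ.castSucc_castPred_apply hσ, Fin.castSucc_lt_castSucc_iff]
  simp [Fin.castSucc_lt_last, not_lt.2 (Fin.le_last _)]

end Equiv.Perm

section AmplitudeRatio

/-- `-Smat Δ v u`, the ratio attached to an inversion. -/
noncomputable def ampRatio (Δ : ℝ) (u v : ℂ) : ℂ :=
  (1 + u * v - 2 * (Δ : ℂ) * v) / (1 + u * v - 2 * (Δ : ℂ) * u)

variable {Δ R : ℝ} {u v : ℂ}

lemma norm_two_mul_sub_one_le (w : ℂ) : ‖2 * (Δ : ℂ) * w - 1‖ ≤ 2 * |Δ| * ‖w‖ + 1 :=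
  (norm_sub_le _ _).trans_eq (by simp)

lemma mul_norm_le_sq_mul_norm_ampRatio_den (hR : 0 ≤ R) (hu : R ≤ ‖u‖) (hv : R ≤ ‖v‖) :
    (R ^ 2 - 2 * |Δ| * R - 1) * (‖u‖ * ‖v‖) ≤ R ^ 2 * ‖1 + u * v - 2 * (Δ : ℂ) * u‖ := by
  have htri := norm_sub_norm_le (u * v) (2 * (Δ : ℂ) * u - 1)
  rw [show u * v - (2 * (Δ : ℂ) * u - 1) = 1 + u * v - 2 * (Δ : ℂ) * u by ring,
    norm_mul] at htri
  have hRR : R * R ≤ ‖u‖ * ‖v‖ := mul_le_mul hu hv hR (hR.trans hu)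
  nlinarith [norm_two_mul_sub_one_le (Δ := Δ) u,
    mul_le_mul_of_nonneg_left hv (mul_nonneg (abs_nonneg Δ) (hR.trans hu))]

lemma sq_mul_norm_ampRatio_num_le (hR : 0 ≤ R) (hu : R ≤ ‖u‖) (hv : R ≤ ‖v‖) :
    R ^ 2 * ‖1 + u * v - 2 * (Δ : ℂ) * v‖ ≤ (R ^ 2 + 2 * |Δ| * R + 1) * (‖u‖ * ‖v‖) := by
  have htri := norm_sub_le (u * v) (2 * (Δ : ℂ) * v - 1)
  rw [show u * v - (2 * (Δ : ℂ) * v - 1) = 1 + u * v - 2 * (Δ : ℂ) * v by ring,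
    norm_mul] at htri
  have hRR : R * R ≤ ‖u‖ * ‖v‖ := mul_le_mul hu hv hR (hR.trans hu)
  nlinarith [norm_two_mul_sub_one_le (Δ := Δ) v,
    mul_le_mul_of_nonneg_right hu (mul_nonneg (abs_nonneg Δ) (hR.trans hv))]

variable (hR : 0 < R) (hR1 : 0 < R ^ 2 - 2 * |Δ| * R - 1)
include hR hR1

lemma ampRatio_den_ne_zero (hu : R ≤ ‖u‖) (hv : R ≤ ‖v‖) :
    1 + u * v - 2 * (Δ : ℂ) * u ≠ 0 := by
  intro h
  have := mul_norm_le_sq_mul_norm_ampRatio_den (Δ := Δ) hR.le hu hv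
  rw [h, norm_zero, mul_zero] at this
  have : 0 < ‖u‖ * ‖v‖ := mul_pos (hR.trans_le hu) (hR.trans_le hv)
  nlinarith

lemma norm_ampRatio_le (hu : R ≤ ‖u‖) (hv : R ≤ ‖v‖) :
    ‖ampRatio Δ u v‖ ≤ (R ^ 2 + 2 * |Δ| * R + 1) / (R ^ 2 - 2 * |Δ| * R - 1) := by
  have huv : 0 < ‖u‖ * ‖v‖ := mul_pos (hR.trans_le hu) (hR.trans_le hv)
  have hden : 0 < ‖1 + u * v - 2 * (Δ : ℂ) * u‖ :=
    norm_pos_iff.mpr (ampRatio_den_ne_zero hR hR1 hu hv)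
  have hA : 0 < R ^ 2 + 2 * |Δ| * R + 1 := by positivity
  rw [ampRatio, norm_div, div_le_div_iff₀ hden hR1]
  refine le_of_mul_le_mul_left ?_ (pow_pos hR 2)
  nlinarith [mul_le_mul_of_nonneg_left (mul_norm_le_sq_mul_norm_ampRatio_den (Δ := Δ) hR.le hu hv)
      hA.le,
    mul_le_mul_of_nonneg_right (sq_mul_norm_ampRatio_num_le (Δ := Δ) hR.le hu hv) hR1.le]

end AmplitudeRatio

section Integrand

noncomputable def integrand (Δ : ℝ) {N : ℕ} (y : Fin N → ℤ) (σ : Equiv.Perm (Fin N))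
    (ξ : Fin N → ℂ) : ℂ :=
  (∏ p ∈ σ.inversions, ampRatio Δ (ξ (σ p.2)) (ξ (σ p.1))) * ∏ j, ξ (σ j) ^ (y j - y (σ j) - 1)

variable {Δ : ℝ} {n : ℕ} {y : Fin (n + 1) → ℤ} {σ : Equiv.Perm (Fin (n + 1))}

lemma integrand_snoc_of_apply_last (hσ : σ (Fin.last n) = Fin.last n) (w : Fin n → ℂ) (t : ℂ) :
    integrand Δ y σ (Fin.snoc w t) =
      integrand Δ (y ∘ Fin.castSucc) (σ.castPred hσ) w * t⁻¹ := by
  rw [integrand, integrand, σ.prod_inversions_eq_prod_inversions_castPred hσ,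
    Fin.prod_univ_castSucc, hσ]
  simp only [← σ.castSucc_castPred_apply hσ, Fin.snoc_castSucc, Fin.snoc_last,
    Function.comp_apply, sub_self, zero_sub, zpow_neg_one, mul_assoc]

lemma integrand_snoc (w : Fin n → ℂ) (t : ℂ) :
    integrand Δ y σ (Fin.snoc w t) =
      t ^ (y (σ.symm (Fin.last n)) - y (Fin.last n) - 1) *
        ((∏ p ∈ σ.inversions,
            ampRatio Δ ((Fin.snoc w t : Fin (n + 1) → ℂ) (σ p.2))
              ((Fin.snoc w t : Fin (n + 1) → ℂ) (σ p.1))) *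
          ∏ i, w i ^ (y (σ.symm i.castSucc) - y i.castSucc - 1)) := by
  have hperm : ∀ ξ : Fin (n + 1) → ℂ, ∏ j, ξ (σ j) ^ (y j - y (σ j) - 1) =
      ∏ k, ξ k ^ (y (σ.symm k) - y k - 1) := fun ξ => by
    rw [← Equiv.prod_comp σ fun k => ξ k ^ (y (σ.symm k) - y k - 1)]
    simp
  rw [integrand, hperm, Fin.prod_univ_castSucc]
  simp only [Fin.snoc_castSucc, Fin.snoc_last]
  ring

lemma le_norm_snoc {R : ℝ} {w : Fin n → ℂ} (hw : ∀ i, ‖w i‖ = R) {t : ℂ} (ht : R ≤ ‖t‖)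
    (i : Fin (n + 1)) : R ≤ ‖(Fin.snoc w t : Fin (n + 1) → ℂ) i‖ := by
  induction i using Fin.lastCases with
  | last => simpa using ht
  | cast j => simp [hw j]

@[fun_prop]
lemma differentiable_snoc_apply (w : Fin n → ℂ) (i : Fin (n + 1)) :
    Differentiable ℂ fun t : ℂ => (Fin.snoc w t : Fin (n + 1) → ℂ) i := by
  induction i using Fin.lastCases with
  | last => simp
  | cast j => simp

end Integrand

section Evaluation

variable {Δ R : ℝ}

lemma cInt_integrand_snoc_eq_zero (hR : 0 < R) (hR1 : 0 < R ^ 2 - 2 * |Δ| * R - 1) {n : ℕ}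
    {y : Fin (n + 1) → ℤ} (hy : StrictMono y) {σ : Equiv.Perm (Fin (n + 1))}
    (hσ : σ (Fin.last n) ≠ Fin.last n) {w : Fin n → ℂ} (hw : ∀ i, ‖w i‖ = R) :
    cInt 0 R (fun t => integrand Δ y σ (Fin.snoc w t)) = 0 := by
  have hlt : σ.symm (Fin.last n) < Fin.last n :=
    (Fin.le_last _).lt_of_ne fun h => hσ (by rw [← h, Equiv.apply_symm_apply, h])
  have he : y (σ.symm (Fin.last n)) - y (Fin.last n) - 1 ≤ -2 := by
    have := hy hlt
    omega
  simp only [integrand_snoc]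
  refine cInt_zpow_mul_eq_zero hR he (fun t ht => ?_)
    ⟨((R ^ 2 + 2 * |Δ| * R + 1) / (R ^ 2 - 2 * |Δ| * R - 1)) ^ σ.inversions.card *
      ‖∏ i, w i ^ (y (σ.symm i.castSucc) - y i.castSucc - 1)‖, fun t ht => ?_⟩
  · unfold ampRatio
    fun_prop (disch :=
      exact ampRatio_den_ne_zero hR hR1 (le_norm_snoc hw ht _) (le_norm_snoc hw ht _))
  · rw [norm_mul, norm_prod]
    refine mul_le_mul_of_nonneg_right ?_ (norm_nonneg _)
    rw [← prod_const]
    exact prod_le_prod (fun p _ => norm_nonneg _) fun p _ =>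
      norm_ampRatio_le hR hR1 (le_norm_snoc hw ht _) (le_norm_snoc hw ht _)

lemma iterInt_integrand (hR : 0 < R) (hR1 : 0 < R ^ 2 - 2 * |Δ| * R - 1) {N : ℕ}
    {y : Fin N → ℤ} (hy : StrictMono y) (σ : Equiv.Perm (Fin N)) :
    iterInt N (fun _ => cInt 0 R) (integrand Δ y σ) = if σ = 1 then 1 else 0 := by
  induction N with
  | zero => simp [Subsingleton.elim σ 1, iterInt, integrand, Equiv.Perm.inversions]
  | succ n ih =>
    rw [iterInt_succ_eq_iterInt_snoc]
    by_cases hσ : σ (Fin.last n) = Fin.last n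
    · have hinner : ∀ w, cInt 0 R (fun t => integrand Δ y σ (Fin.snoc w t)) =
          integrand Δ (y ∘ Fin.castSucc) (σ.castPred hσ) w := fun w => by
        have hinv : cInt 0 R (fun t => t⁻¹) = 1 := by simpa using cInt_sub_center_inv 0 hR.ne'
        simp only [integrand_snoc_of_apply_last hσ, cInt_const_mul, hinv, mul_one]
      simp only [hinner, ih (hy.comp Fin.strictMono_castSucc), σ.castPred_eq_one_iff hσ]
    · rw [if_neg (fun h => hσ (by simp [h])), iterInt_cInt_congr (g := fun _ => 0),
        iterInt_cInt_zero]
      intro w hw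
      exact cInt_integrand_snoc_eq_zero hR hR1 hy hσ fun i => by simpa [abs_of_pos hR] using hw i

end Evaluation

theorem stmt6_general (Δ : ℝ) (N : ℕ) (y : Fin N → ℤ) (hy : StrictMono y)
    (R : ℝ) (hR : 0 < R) (hR1 : 0 < R ^ 2 - 2 * |Δ| * R - 1) :
    (∑ σ : Equiv.Perm (Fin N),
      ((Equiv.Perm.sign σ : ℤ) : ℂ) *
        iterInt N (fun _ => cInt 0 R) fun ξ =>
          (∏ p ∈ Finset.univ.filter
              (fun p : Fin N × Fin N => p.1 < p.2 ∧ σ p.2 < σ p.1),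
            (1 + ξ (σ p.2) * ξ (σ p.1) - 2 * (Δ : ℂ) * ξ (σ p.1)) /
              (1 + ξ (σ p.2) * ξ (σ p.1) - 2 * (Δ : ℂ) * ξ (σ p.2))) *
          ∏ j, ξ (σ j) ^ (y j - y (σ j) - 1)) = 1 := by
  calc _ = ∑ σ : Equiv.Perm (Fin N), ((Equiv.Perm.sign σ : ℤ) : ℂ) * if σ = 1 then 1 else 0 :=
        sum_congr rfl fun σ _ => congrArg _ (iterInt_integrand hR hR1 hy σ)
    _ = 1 := by simp

theorem stmt6 (Δ : ℝ) (N : ℕ) (hN : 0 < N) (y : Fin N → ℤ) (hy : StrictMono y)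
    (R : ℝ) (hR : 0 < R) (hR1 : 0 < R ^ 2 - 2 * |Δ| * R - 1) :
    (∑ σ : Equiv.Perm (Fin N),
      ((Equiv.Perm.sign σ : ℤ) : ℂ) *
        iterInt N (fun _ => cInt 0 R) fun ξ =>
          (∏ p ∈ Finset.univ.filter
              (fun p : Fin N × Fin N => p.1 < p.2 ∧ σ p.2 < σ p.1),
            (1 + ξ (σ p.2) * ξ (σ p.1) - 2 * (Δ : ℂ) * ξ (σ p.1)) /
              (1 + ξ (σ p.2) * ξ (σ p.1) - 2 * (Δ : ℂ) * ξ (σ p.2))) *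
          ∏ j, ξ (σ j) ^ (y j - y (σ j) - 1)) = 1 :=
  stmt6_general Δ N y hy R hR hR1
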